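/- Let Ω ⊂ ℝ^d be a bounded domain with Lebesgue measure, let F satisfy (A1)–(A3), let τ > 0, and let u : Ω → [0,∞) be integrable with F(u) ∈ L¹(Ω). If v̂ is a minimizer of the Fisher–Rao JKO functional G(v) = ∫_Ω F(v) dx + (2/τ) ∫_Ω (√v − √u)² dx over nonnegative measurable v with F(v) ∈ L¹(Ω), then for every bounded measurable ψ : Ω → ℝ one has ∫_Ω (√v̂ − √u) √v̂ ψ dx = −(τ/2) ∫_Ω F'(v̂) v̂ ψ dx. -/

import Mathlib

/-!
Perturb the minimizer multiplicatively, `w_ε = (1 + ε η) v̂` with `η` bounded and `ε > 0` small,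
so that `w_ε` stays admissible and `(G(w_ε) - G(v̂)) / ε ≥ 0`. Since `F'` is nondecreasing and
bounded below by `-α`, the mean value theorem gives
`|F(w_ε) - F(v̂)| ≤ ε |η| (|F'(2v̂) v̂| + |α| v̂)`, which is integrable by (A3) because `v̂ ∈ L¹`
(`F` grows superlinearly); the Fisher–Rao term is dominated by `ε |η| (2 v̂ + u)`. Dominated
convergence then gives `0 ≤ ∫ F'(v̂) v̂ η + (2/τ) ∫ (√v̂ - √u) √v̂ η`, and `η = ±ψ` gives equality.
-/

open Real Set MeasureTheory Filter Topology

/-- Admissible class for the Fisher–Rao JKO step: nonnegative measurable densities `v`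
on `Ω` with `F(v) ∈ L¹(Ω)`. -/
def FRAdm (d : ℕ) (Ω : Set (Fin d → ℝ)) (F : ℝ → ℝ) (v : (Fin d → ℝ) → ℝ) : Prop :=
  Measurable v ∧ (∀ x, 0 ≤ v x) ∧ MeasureTheory.IntegrableOn (fun x => F (v x)) Ω

/-- The Fisher–Rao JKO functional
`G(v) = ∫_Ω F(v) dx + (2/τ) ∫_Ω (√v − √u)² dx`. -/
noncomputable def FRJKO (d : ℕ) (Ω : Set (Fin d → ℝ)) (F : ℝ → ℝ) (τ : ℝ)
    (u v : (Fin d → ℝ) → ℝ) : ℝ :=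
  (∫ x in Ω, F (v x)) + (2 / τ) * ∫ x in Ω, (Real.sqrt (v x) - Real.sqrt (u x)) ^ 2

section RealVariable

variable {F : ℝ → ℝ} {a : ℝ}

theorem abs_sub_le_of_monotoneOn_deriv (hFd : DifferentiableOn ℝ F (Ioi 0))
    (hmono : MonotoneOn (deriv F) (Ioi 0)) (hlow : ∀ s, 0 < s → a ≤ deriv F s)
    {b x y : ℝ} (hx : x ∈ Ioc 0 b) (hy : y ∈ Ioc 0 b) :
    |F y - F x| ≤ (|deriv F b| + |a|) * |y - x| := by
  refine Convex.norm_image_sub_le_of_norm_deriv_le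
    (fun z hz => hFd.differentiableAt (Ioi_mem_nhds hz.1)) (fun z hz => ?_) (convex_Ioc 0 b) hx hy
  have hzb : deriv F z ≤ deriv F b := hmono hz.1 (hz.1.trans_le hz.2) hz.2
  rw [Real.norm_eq_abs, abs_le]
  constructor <;> linarith [hlow z hz.1, neg_abs_le a, le_abs_self (deriv F b),
    neg_abs_le (deriv F b), le_abs_self a]

theorem one_add_mul_nonneg_of_abs_lt {s t : ℝ} (hs : 0 ≤ s) (ht : |t| < 1) : 0 ≤ (1 + t) * s :=
  mul_nonneg (by linarith [neg_abs_le t]) hs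

theorem abs_comp_one_add_mul_sub_le (hFd : DifferentiableOn ℝ F (Ioi 0))
    (hmono : MonotoneOn (deriv F) (Ioi 0)) (hlow : ∀ s, 0 < s → a ≤ deriv F s)
    {s t : ℝ} (hs : 0 ≤ s) (ht : |t| < 1) :
    |F ((1 + t) * s) - F s| ≤ |t| * (|deriv F (2 * s) * s| + |a| * s) := by
  rcases hs.eq_or_lt with rfl | hs
  · simp
  obtain ⟨ht₁, ht₂⟩ := abs_lt.1 ht
  have hmem : ∀ c : ℝ, 0 < c → c ≤ 2 → c * s ∈ Ioc 0 (2 * s) := fun c hc hc₂ =>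
    ⟨mul_pos hc hs, mul_le_mul_of_nonneg_right hc₂ hs.le⟩
  have h := abs_sub_le_of_monotoneOn_deriv hFd hmono hlow
    (hmem 1 one_pos one_le_two) (hmem (1 + t) (by linarith) (by linarith))
  rw [one_mul] at h
  calc |F ((1 + t) * s) - F s| ≤ (|deriv F (2 * s)| + |a|) * |(1 + t) * s - s| := h
    _ = |t| * (|deriv F (2 * s) * s| + |a| * s) := by
      rw [show (1 + t) * s - s = t * s by ring, abs_mul, abs_mul, abs_of_pos hs]
      ring

theorem exists_le_abs_add_of_tendsto_deriv (hFc : ContinuousOn F (Ici 0))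
    (hFd : DifferentiableOn ℝ F (Ioi 0)) (hmono : MonotoneOn (deriv F) (Ioi 0))
    (htop : Tendsto (deriv F) atTop atTop) : ∃ C, ∀ s, 0 ≤ s → s ≤ |F s| + C := by
  obtain ⟨t₀, ht₀, ht₀0⟩ := ((htop.eventually_ge_atTop 1).and (eventually_gt_atTop 0)).exists
  refine ⟨t₀ + |F t₀|, fun s hs => ?_⟩
  rcases le_or_gt s t₀ with hst | hst
  · linarith [abs_nonneg (F s), abs_nonneg (F t₀)]
  have hslope : 1 * (s - t₀) ≤ F s - F t₀ := by
    refine Convex.mul_sub_le_image_sub_of_le_deriv (convex_Ici t₀)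
      (hFc.mono fun y hy => ht₀0.le.trans hy) ?_ (fun x hx => ?_) t₀ self_mem_Ici s hst.le hst.le
    · rw [interior_Ici]
      exact hFd.mono fun y hy => ht₀0.trans hy
    · rw [interior_Ici] at hx
      exact ht₀.trans (hmono ht₀0 (ht₀0.trans hx) hx.le)
  linarith [le_abs_self (F s), neg_abs_le (F t₀)]

theorem abs_sqrt_one_add_sub_one_le {t : ℝ} (ht : -1 ≤ t) : |√(1 + t) - 1| ≤ |t| := by
  have h1 : 0 ≤ 1 + t := by linarith
  have hprod : (√(1 + t) - 1) * (√(1 + t) + 1) = t := by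
    nlinarith [Real.mul_self_sqrt h1]
  have hpos : 1 ≤ √(1 + t) + 1 := by linarith [Real.sqrt_nonneg (1 + t)]
  calc |√(1 + t) - 1| ≤ |√(1 + t) - 1| * (√(1 + t) + 1) :=
        le_mul_of_one_le_right (abs_nonneg _) hpos
    _ = |(√(1 + t) - 1) * (√(1 + t) + 1)| := by
      rw [abs_mul, abs_of_pos (by linarith : (0 : ℝ) < √(1 + t) + 1)]
    _ = |t| := by rw [hprod]

theorem sq_sqrt_one_add_mul_sub_sub_sq {s t : ℝ} (hs : 0 ≤ s) (ht : 0 ≤ 1 + t) (y : ℝ) :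
    (√((1 + t) * s) - y) ^ 2 - (√s - y) ^ 2 = t * s - 2 * y * √s * (√(1 + t) - 1) := by
  rw [Real.sqrt_mul ht, sub_sq, sub_sq, mul_pow, Real.sq_sqrt ht, Real.sq_sqrt hs]
  ring

theorem abs_sq_sqrt_one_add_mul_sub_sub_sq_le {s t : ℝ} (hs : 0 ≤ s) (ht : -1 ≤ t) (y : ℝ) :
    |(√((1 + t) * s) - y) ^ 2 - (√s - y) ^ 2| ≤ |t| * (2 * s + y ^ 2) := by
  rw [sq_sqrt_one_add_mul_sub_sub_sq hs (by linarith) y]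
  have hsqrt := abs_sqrt_one_add_sub_one_le ht
  have hamgm : 2 * |y| * √s ≤ y ^ 2 + s := by
    nlinarith [sq_nonneg (|y| - √s), Real.sq_sqrt hs, sq_abs y]
  calc |t * s - 2 * y * √s * (√(1 + t) - 1)|
      ≤ |t| * s + 2 * |y| * √s * |t| := by
        refine (abs_sub _ _).trans (add_le_add (by rw [abs_mul, abs_of_nonneg hs]) ?_)
        rw [abs_mul, abs_mul, abs_mul, abs_of_nonneg (Real.sqrt_nonneg s), abs_two]
        exact mul_le_mul_of_nonneg_left hsqrt (by positivity)
    _ ≤ |t| * (2 * s + y ^ 2) := by nlinarith [abs_nonneg t]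

theorem tendsto_slope_comp_one_add_mul (hFd : DifferentiableOn ℝ F (Ioi 0)) {s : ℝ} (hs : 0 ≤ s)
    (c : ℝ) : Tendsto (fun ε => (F ((1 + ε * c) * s) - F s) / ε) (𝓝[>] 0)
      (𝓝 (deriv F s * s * c)) := by
  rcases hs.eq_or_lt with rfl | hs
  · simp
  have hinner : HasDerivAt (fun ε : ℝ => (1 + ε * c) * s) (c * s) 0 := by
    simpa using (((hasDerivAt_id (0 : ℝ)).mul_const c).const_add 1).mul_const s
  have hF : HasDerivAt F (deriv F s) ((1 + 0 * c) * s) := by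
    rw [zero_mul, add_zero, one_mul]
    exact (hFd.differentiableAt (Ioi_mem_nhds hs)).hasDerivAt
  convert (hF.comp 0 hinner).tendsto_slope_zero_right using 2 with ε
  · simp [div_eq_inv_mul]
  · ring

theorem tendsto_slope_sq_sqrt_one_add_mul_sub {s : ℝ} (hs : 0 ≤ s) (c y : ℝ) :
    Tendsto (fun ε => ((√((1 + ε * c) * s) - y) ^ 2 - (√s - y) ^ 2) / ε) (𝓝[>] 0)
      (𝓝 ((√s - y) * √s * c)) := by
  have hsqrt : HasDerivAt (fun ε : ℝ => √(1 + ε * c)) (c / 2) 0 := by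
    convert (((hasDerivAt_id' (0 : ℝ)).mul_const c).const_add 1).sqrt (by simp) using 1
    norm_num
  have hlim : Tendsto (fun ε => c * s - 2 * y * √s * ((√(1 + ε * c) - 1) / ε)) (𝓝[>] 0)
      (𝓝 (c * s - 2 * y * √s * (c / 2))) := by
    refine tendsto_const_nhds.sub (Tendsto.const_mul _ ?_)
    convert hsqrt.tendsto_slope_zero_right using 2 with ε
    simp [div_eq_inv_mul]
  have hval : (√s - y) * √s * c = c * s - 2 * y * √s * (c / 2) := by
    linear_combination c * Real.mul_self_sqrt hs
  rw [hval]
  refine hlim.congr' ?_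
  have hnear : ∀ᶠ ε in 𝓝[>] (0 : ℝ), 0 ≤ 1 + ε * c := by
    have : Tendsto (fun ε : ℝ => 1 + ε * c) (𝓝[>] 0) (𝓝 1) := by
      simpa using (((continuous_mul_const c).const_add 1).tendsto 0).mono_left nhdsWithin_le_nhds
    exact this.eventually (eventually_ge_nhds zero_lt_one)
  filter_upwards [hnear, self_mem_nhdsWithin] with ε hε hε0
  rw [sq_sqrt_one_add_mul_sub_sub_sq hs hε y]
  field_simp [(mem_Ioi.1 hε0).ne']

end RealVariable

theorem eventually_forall_abs_mul_lt_one {α : Type*} {η : α → ℝ} {B : ℝ}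
    (hηB : ∀ x, |η x| ≤ B) : ∀ᶠ ε in 𝓝[>] (0 : ℝ), ∀ x, |ε * η x| < 1 := by
  filter_upwards [Ioo_mem_nhdsGT (inv_pos.2 (by positivity : (0 : ℝ) < |B| + 1))]
    with ε ⟨hε0, hε1⟩ x
  rw [abs_mul, abs_of_pos hε0]
  calc ε * |η x| ≤ ε * (|B| + 1) := by
        gcongr; linarith [hηB x, le_abs_self B]
    _ < (|B| + 1)⁻¹ * (|B| + 1) := by gcongr
    _ = 1 := inv_mul_cancel₀ (by positivity)

section Integration

variable {α : Type*} [MeasurableSpace α] {μ : Measure α} {F : ℝ → ℝ} {a : ℝ}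

theorem ContinuousOn.comp_aestronglyMeasurable_of_nonneg (hFc : ContinuousOn F (Ici 0))
    {w : α → ℝ} (hw : AEStronglyMeasurable w μ) (hw0 : ∀ x, 0 ≤ w x) :
    AEStronglyMeasurable (fun x => F (w x)) μ := by
  have hcont : Continuous fun s => F (max s 0) :=
    hFc.comp_continuous (continuous_id.max continuous_const) fun s => le_max_right s 0
  simpa only [Function.comp_def, max_eq_left (hw0 _)] using hcont.comp_aestronglyMeasurable hw

theorem integrable_of_le_abs_add [IsFiniteMeasure μ] {C : ℝ} (hF : ∀ s, 0 ≤ s → s ≤ |F s| + C)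
    {v : α → ℝ} (hvm : AEStronglyMeasurable v μ) (hv0 : ∀ x, 0 ≤ v x)
    (hFv : Integrable (fun x => F (v x)) μ) : Integrable v μ := by
  refine (hFv.abs.add (integrable_const C)).mono' hvm (Eventually.of_forall fun x => ?_)
  rw [Real.norm_eq_abs, abs_of_nonneg (hv0 x)]
  exact hF (v x) (hv0 x)

theorem integrable_sq_sqrt_sub_sqrt {u w : α → ℝ} (hu : Integrable u μ) (hw : Integrable w μ)
    (hu0 : ∀ x, 0 ≤ u x) (hw0 : ∀ x, 0 ≤ w x) :
    Integrable (fun x => (√(w x) - √(u x)) ^ 2) μ := by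
  have hsqrt : ∀ {f : α → ℝ}, Integrable f μ → AEStronglyMeasurable (fun x => √(f x)) μ :=
    fun hf => continuous_sqrt.comp_aestronglyMeasurable hf.aestronglyMeasurable
  refine (hw.add hu).mono' (((hsqrt hw).sub (hsqrt hu)).pow 2) (Eventually.of_forall fun x => ?_)
  rw [Real.norm_eq_abs, abs_of_nonneg (sq_nonneg _), sub_sq, Real.sq_sqrt (hw0 x),
    Real.sq_sqrt (hu0 x)]
  have := mul_nonneg (Real.sqrt_nonneg (w x)) (Real.sqrt_nonneg (u x))
  simp only [Pi.add_apply]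
  linarith

variable {v η : α → ℝ} {B : ℝ}

theorem integrable_one_add_mul_mul (hv : Integrable v μ) (hη : AEStronglyMeasurable η μ)
    (hηB : ∀ x, |η x| ≤ B) (ε : ℝ) : Integrable (fun x => (1 + ε * η x) * v x) μ := by
  refine hv.bdd_mul (c := 1 + |ε| * B) (aestronglyMeasurable_const.add (hη.const_mul ε))
    (Eventually.of_forall fun x => ?_)
  rw [Real.norm_eq_abs]
  calc |1 + ε * η x| ≤ |1| + |ε| * |η x| := by rw [← abs_mul]; exact abs_add_le _ _
    _ ≤ 1 + |ε| * B := by rw [abs_one]; gcongr; exact hηB x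

theorem integrable_comp_one_add_mul_mul (hFc : ContinuousOn F (Ici 0))
    (hFd : DifferentiableOn ℝ F (Ioi 0)) (hmono : MonotoneOn (deriv F) (Ioi 0))
    (hlow : ∀ s, 0 < s → a ≤ deriv F s) (hv : Integrable v μ) (hv0 : ∀ x, 0 ≤ v x)
    (hFv : Integrable (fun x => F (v x)) μ)
    (hF'v : Integrable (fun x => deriv F (2 * v x) * v x) μ)
    (hη : AEStronglyMeasurable η μ) (hηB : ∀ x, |η x| ≤ B) {ε : ℝ} (hε : ∀ x, |ε * η x| < 1) :
    Integrable (fun x => F ((1 + ε * η x) * v x)) μ := by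
  refine (hFv.abs.add (hF'v.abs.add (hv.const_mul |a|))).mono'
    (hFc.comp_aestronglyMeasurable_of_nonneg
      (integrable_one_add_mul_mul hv hη hηB ε).aestronglyMeasurable
      fun x => one_add_mul_nonneg_of_abs_lt (hv0 x) (hε x))
    (Eventually.of_forall fun x => ?_)
  have h := abs_comp_one_add_mul_sub_le hFd hmono hlow (hv0 x) (hε x)
  have hbound : |ε * η x| * (|deriv F (2 * v x) * v x| + |a| * v x)
      ≤ |deriv F (2 * v x) * v x| + |a| * v x :=
    mul_le_of_le_one_left (by have := hv0 x; positivity) (hε x).le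
  simp only [Real.norm_eq_abs, Pi.add_apply]
  linarith [abs_sub_abs_le_abs_sub (F ((1 + ε * η x) * v x)) (F (v x))]

theorem tendsto_integral_slope_comp_one_add_mul_mul (hFc : ContinuousOn F (Ici 0))
    (hFd : DifferentiableOn ℝ F (Ioi 0)) (hmono : MonotoneOn (deriv F) (Ioi 0))
    (hlow : ∀ s, 0 < s → a ≤ deriv F s) (hv : Integrable v μ) (hv0 : ∀ x, 0 ≤ v x)
    (hF'v : Integrable (fun x => deriv F (2 * v x) * v x) μ)
    (hη : AEStronglyMeasurable η μ) (hηB : ∀ x, |η x| ≤ B) :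
    Tendsto (fun ε => ∫ x, (F ((1 + ε * η x) * v x) - F (v x)) / ε ∂μ) (𝓝[>] 0)
      (𝓝 (∫ x, deriv F (v x) * v x * η x ∂μ)) := by
  refine tendsto_integral_filter_of_dominated_convergence
    (fun x => B * (|deriv F (2 * v x) * v x| + |a| * v x)) ?_ ?_
    ((hF'v.abs.add (hv.const_mul |a|)).const_mul B)
    (Eventually.of_forall fun x => tendsto_slope_comp_one_add_mul hFd (hv0 x) (η x))
  · filter_upwards [eventually_forall_abs_mul_lt_one hηB] with ε hε
    have hFw := hFc.comp_aestronglyMeasurable_of_nonneg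
      (integrable_one_add_mul_mul hv hη hηB ε).aestronglyMeasurable
      fun x => one_add_mul_nonneg_of_abs_lt (hv0 x) (hε x)
    have hFv := hFc.comp_aestronglyMeasurable_of_nonneg hv.aestronglyMeasurable hv0
    exact ((hFw.sub hFv).aemeasurable.div_const ε).aestronglyMeasurable
  · filter_upwards [eventually_forall_abs_mul_lt_one hηB, self_mem_nhdsWithin]
      with ε hε hε0
    refine Eventually.of_forall fun x => ?_
    have h := abs_comp_one_add_mul_sub_le hFd hmono hlow (hv0 x) (hε x)
    rw [Real.norm_eq_abs, abs_div, abs_of_pos (mem_Ioi.1 hε0), div_le_iff₀ (mem_Ioi.1 hε0)]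
    rw [abs_mul, abs_of_pos (mem_Ioi.1 hε0)] at h
    calc |F ((1 + ε * η x) * v x) - F (v x)|
        ≤ ε * |η x| * (|deriv F (2 * v x) * v x| + |a| * v x) := h
      _ ≤ ε * B * (|deriv F (2 * v x) * v x| + |a| * v x) := by
        have := hv0 x
        gcongr
        exacts [(mem_Ioi.1 hε0).le, hηB x]
      _ = B * (|deriv F (2 * v x) * v x| + |a| * v x) * ε := by ring

theorem tendsto_integral_slope_sq_sqrt_sub {u : α → ℝ} (hu : Integrable u μ)
    (hv : Integrable v μ) (hu0 : ∀ x, 0 ≤ u x) (hv0 : ∀ x, 0 ≤ v x)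
    (hη : AEStronglyMeasurable η μ) (hηB : ∀ x, |η x| ≤ B) :
    Tendsto (fun ε => ∫ x, ((√((1 + ε * η x) * v x) - √(u x)) ^ 2
        - (√(v x) - √(u x)) ^ 2) / ε ∂μ) (𝓝[>] 0)
      (𝓝 (∫ x, (√(v x) - √(u x)) * √(v x) * η x ∂μ)) := by
  refine tendsto_integral_filter_of_dominated_convergence (fun x => B * (2 * v x + u x))
    ?_ ?_ (((hv.const_mul 2).add hu).const_mul B)
    (Eventually.of_forall fun x => tendsto_slope_sq_sqrt_one_add_mul_sub (hv0 x) (η x) √(u x))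
  · filter_upwards [eventually_forall_abs_mul_lt_one hηB] with ε hε
    have hw := integrable_sq_sqrt_sub_sqrt hu (integrable_one_add_mul_mul hv hη hηB ε) hu0
      fun x => one_add_mul_nonneg_of_abs_lt (hv0 x) (hε x)
    exact ((hw.sub (integrable_sq_sqrt_sub_sqrt hu hv hu0 hv0)).aemeasurable.div_const
      ε).aestronglyMeasurable
  · filter_upwards [eventually_forall_abs_mul_lt_one hηB, self_mem_nhdsWithin]
      with ε hε hε0
    refine Eventually.of_forall fun x => ?_
    have h := abs_sq_sqrt_one_add_mul_sub_sub_sq_le (t := ε * η x) (hv0 x)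
      (by linarith [neg_abs_le (ε * η x), hε x]) √(u x)
    rw [Real.sq_sqrt (hu0 x), abs_mul, abs_of_pos (mem_Ioi.1 hε0)] at h
    rw [Real.norm_eq_abs, abs_div, abs_of_pos (mem_Ioi.1 hε0), div_le_iff₀ (mem_Ioi.1 hε0)]
    calc _ ≤ ε * |η x| * (2 * v x + u x) := h
      _ ≤ ε * B * (2 * v x + u x) := by
        have := hv0 x; have := hu0 x
        gcongr
        exacts [(mem_Ioi.1 hε0).le, hηB x]
      _ = B * (2 * v x + u x) * ε := by ring

end Integration

namespace FRJKO

variable {d : ℕ} {Ω : Set (Fin d → ℝ)} {F : ℝ → ℝ} {τ : ℝ} {u v w : (Fin d → ℝ) → ℝ}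

/-- The derivative at `ε = 0` of `ε ↦ G((1 + ε η) v)`, `G = FRJKO d Ω F τ u`. -/
noncomputable def firstVariation (d : ℕ) (Ω : Set (Fin d → ℝ)) (F : ℝ → ℝ) (τ : ℝ)
    (u v η : (Fin d → ℝ) → ℝ) : ℝ :=
  (∫ x in Ω, deriv F (v x) * v x * η x)
    + (2 / τ) * ∫ x in Ω, (√(v x) - √(u x)) * √(v x) * η x

theorem firstVariation_neg (η : (Fin d → ℝ) → ℝ) :
    firstVariation d Ω F τ u v (fun x => -η x) = -firstVariation d Ω F τ u v η := by
  simp only [firstVariation, mul_neg, integral_neg]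
  ring

theorem sub_div_eq (hFw : IntegrableOn (fun x => F (w x)) Ω)
    (hFv : IntegrableOn (fun x => F (v x)) Ω)
    (hw : IntegrableOn (fun x => (√(w x) - √(u x)) ^ 2) Ω)
    (hv : IntegrableOn (fun x => (√(v x) - √(u x)) ^ 2) Ω) (ε : ℝ) :
    (FRJKO d Ω F τ u w - FRJKO d Ω F τ u v) / ε
      = (∫ x in Ω, (F (w x) - F (v x)) / ε)
        + (2 / τ) * ∫ x in Ω, ((√(w x) - √(u x)) ^ 2 - (√(v x) - √(u x)) ^ 2) / ε := by
  simp only [FRJKO]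
  rw [integral_div, integral_div, integral_sub hFw hFv, integral_sub hw hv]
  ring

variable {a B : ℝ} {η : (Fin d → ℝ) → ℝ}

theorem tendsto_slope (hFc : ContinuousOn F (Ici 0)) (hFd : DifferentiableOn ℝ F (Ioi 0))
    (hmono : MonotoneOn (deriv F) (Ioi 0)) (hlow : ∀ s, 0 < s → a ≤ deriv F s)
    (hu : IntegrableOn u Ω) (hu0 : ∀ x, 0 ≤ u x) (hv : IntegrableOn v Ω) (hv0 : ∀ x, 0 ≤ v x)
    (hFv : IntegrableOn (fun x => F (v x)) Ω)
    (hF'v : IntegrableOn (fun x => deriv F (2 * v x) * v x) Ω)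
    (hη : AEStronglyMeasurable η (volume.restrict Ω)) (hηB : ∀ x, |η x| ≤ B) :
    Tendsto (fun ε => (FRJKO d Ω F τ u (fun x => (1 + ε * η x) * v x) - FRJKO d Ω F τ u v) / ε)
      (𝓝[>] 0) (𝓝 (firstVariation d Ω F τ u v η)) := by
  refine ((tendsto_integral_slope_comp_one_add_mul_mul hFc hFd hmono hlow hv hv0 hF'v hη hηB).add
    ((tendsto_integral_slope_sq_sqrt_sub hu hv hu0 hv0 hη hηB).const_mul (2 / τ))).congr' ?_
  filter_upwards [eventually_forall_abs_mul_lt_one hηB] with ε hε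
  refine (sub_div_eq ?_ hFv ?_ (integrable_sq_sqrt_sub_sqrt hu hv hu0 hv0) ε).symm
  · exact integrable_comp_one_add_mul_mul hFc hFd hmono hlow hv hv0 hFv hF'v hη hηB hε
  · exact integrable_sq_sqrt_sub_sqrt hu (integrable_one_add_mul_mul hv hη hηB ε) hu0
      fun x => one_add_mul_nonneg_of_abs_lt (hv0 x) (hε x)

theorem firstVariation_nonneg (hFc : ContinuousOn F (Ici 0))
    (hFd : DifferentiableOn ℝ F (Ioi 0)) (hmono : MonotoneOn (deriv F) (Ioi 0))
    (hlow : ∀ s, 0 < s → a ≤ deriv F s) (hu : IntegrableOn u Ω) (hu0 : ∀ x, 0 ≤ u x)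
    (hvA : FRAdm d Ω F v) (hv : IntegrableOn v Ω)
    (hF'v : IntegrableOn (fun x => deriv F (2 * v x) * v x) Ω)
    (hmin : ∀ w, FRAdm d Ω F w → FRJKO d Ω F τ u v ≤ FRJKO d Ω F τ u w)
    (hη : Measurable η) (hηB : ∀ x, |η x| ≤ B) : 0 ≤ firstVariation d Ω F τ u v η := by
  obtain ⟨hvm, hv0, hFv⟩ := hvA
  refine ge_of_tendsto (tendsto_slope hFc hFd hmono hlow hu hu0 hv hv0 hFv hF'v
    hη.aestronglyMeasurable hηB) ?_
  filter_upwards [eventually_forall_abs_mul_lt_one hηB, self_mem_nhdsWithin] with ε hε hε0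
  have hwA : FRAdm d Ω F fun x => (1 + ε * η x) * v x :=
    ⟨(measurable_const.add (hη.const_mul ε)).mul hvm,
      fun x => one_add_mul_nonneg_of_abs_lt (hv0 x) (hε x),
      integrable_comp_one_add_mul_mul hFc hFd hmono hlow hv hv0 hFv hF'v
        hη.aestronglyMeasurable hηB hε⟩
  exact div_nonneg (sub_nonneg.2 (hmin _ hwA)) (le_of_lt hε0)

end FRJKO

theorem stmt8_general (d : ℕ) (Ω : Set (Fin d → ℝ)) (hΩb : Bornology.IsBounded Ω)
    (F : ℝ → ℝ) (α β r : ℝ) (hβ : 0 < β) (hr : 1 < r)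
    (hF1 : ContDiffOn ℝ 1 F (Set.Ici 0)) (hF2 : ContDiffOn ℝ 2 F (Set.Ioi 0))
    (hF'' : ∀ s : ℝ, 0 < s → 0 < deriv (deriv F) s)
    (hFlow : ∀ s : ℝ, 0 < s → β * s ^ (r - 1) - α ≤ deriv F s)
    (hA3 : ∀ M : ℝ, 0 < M → ∀ w : (Fin d → ℝ) → ℝ, (∀ x, 0 ≤ w x) →
      IntegrableOn w Ω → IntegrableOn (fun x => F (w x)) Ω →
      IntegrableOn (fun x => deriv F (M * w x) * w x) Ω)
    (τ : ℝ) (hτ : 0 < τ)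
    (u : (Fin d → ℝ) → ℝ) (hu0 : ∀ x, 0 ≤ u x)
    (huI : IntegrableOn u Ω)
    (vhat : (Fin d → ℝ) → ℝ) (hvA : FRAdm d Ω F vhat)
    (hvmin : ∀ w, FRAdm d Ω F w → FRJKO d Ω F τ u vhat ≤ FRJKO d Ω F τ u w) :
    ∀ ψ : (Fin d → ℝ) → ℝ, Measurable ψ → (∃ B : ℝ, ∀ x, |ψ x| ≤ B) →
      (∫ x in Ω, (Real.sqrt (vhat x) - Real.sqrt (u x)) * Real.sqrt (vhat x) * ψ x)
        = -(τ / 2) * ∫ x in Ω, deriv F (vhat x) * vhat x * ψ x := by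
  rintro ψ hψ ⟨B, hψB⟩
  have : IsFiniteMeasure (volume.restrict Ω) := ⟨by simpa using hΩb.measure_lt_top⟩
  have hFc : ContinuousOn F (Ici 0) := hF1.continuousOn
  have hFd : DifferentiableOn ℝ F (Ioi 0) := hF2.differentiableOn two_ne_zero
  have hmono : MonotoneOn (deriv F) (Ioi 0) :=
    (strictMonoOn_of_deriv_pos (convex_Ioi 0) (hF2.continuousOn_deriv_of_isOpen isOpen_Ioi
      one_le_two) fun s hs => hF'' s (by rwa [interior_Ioi] at hs)).monotoneOn
  have hlow : ∀ s, 0 < s → -α ≤ deriv F s := fun s hs => by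
    linarith [hFlow s hs, mul_nonneg hβ.le (rpow_nonneg hs.le (r - 1))]
  have htop : Tendsto (deriv F) atTop atTop :=
    tendsto_atTop_mono' _ ((eventually_gt_atTop 0).mono hFlow)
      (tendsto_atTop_add_const_right _ (-α)
        ((tendsto_rpow_atTop (sub_pos.2 hr)).const_mul_atTop hβ))
  obtain ⟨C, hC⟩ := exists_le_abs_add_of_tendsto_deriv hFc hFd hmono htop
  have hv : IntegrableOn vhat Ω :=
    integrable_of_le_abs_add hC hvA.1.aestronglyMeasurable hvA.2.1 hvA.2.2
  have hvar : ∀ η, Measurable η → (∀ x, |η x| ≤ B) →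
      0 ≤ FRJKO.firstVariation d Ω F τ u vhat η := fun η hη hηB =>
    FRJKO.firstVariation_nonneg hFc hFd hmono hlow huI hu0 hvA hv
      (hA3 2 two_pos vhat hvA.2.1 hv hvA.2.2) hvmin hη hηB
  have hzero : FRJKO.firstVariation d Ω F τ u vhat ψ = 0 := by
    refine le_antisymm ?_ (hvar ψ hψ hψB)
    have h := hvar (fun x => -ψ x) hψ.neg fun x => by simpa only [abs_neg] using hψB x
    rwa [FRJKO.firstVariation_neg, neg_nonneg] at h
  rw [FRJKO.firstVariation] at hzero
  field_simp at hzero ⊢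
  linarith

/-- Euler–Lagrange equation for the Fisher–Rao JKO step: for every
bounded measurable `ψ`,
`∫_Ω (√v̂ − √u) √v̂ ψ = −(τ/2) ∫_Ω F'(v̂) v̂ ψ`. -/
theorem stmt8 (d : ℕ) (Ω : Set (Fin d → ℝ)) (hΩo : IsOpen Ω) (hΩb : Bornology.IsBounded Ω)
    (F : ℝ → ℝ) (α β r : ℝ) (hα : 0 ≤ α) (hβ : 0 < β) (hr : 1 < r)
    (hF1 : ContDiffOn ℝ 1 F (Set.Ici 0)) (hF2 : ContDiffOn ℝ 2 F (Set.Ioi 0))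
    (hF'' : ∀ s : ℝ, 0 < s → 0 < deriv (deriv F) s)
    (hFlow : ∀ s : ℝ, 0 < s → β * s ^ (r - 1) - α ≤ deriv F s)
    (hA3 : ∀ M : ℝ, 0 < M → ∀ w : (Fin d → ℝ) → ℝ, (∀ x, 0 ≤ w x) →
      IntegrableOn w Ω → IntegrableOn (fun x => F (w x)) Ω →
      IntegrableOn (fun x => deriv F (M * w x) * w x) Ω)
    (τ : ℝ) (hτ : 0 < τ)
    (u : (Fin d → ℝ) → ℝ) (hu0 : ∀ x, 0 ≤ u x) (hum : Measurable u)
    (huI : IntegrableOn u Ω) (huF : IntegrableOn (fun x => F (u x)) Ω)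
    (vhat : (Fin d → ℝ) → ℝ) (hvA : FRAdm d Ω F vhat)
    (hvmin : ∀ w, FRAdm d Ω F w → FRJKO d Ω F τ u vhat ≤ FRJKO d Ω F τ u w) :
    ∀ ψ : (Fin d → ℝ) → ℝ, Measurable ψ → (∃ B : ℝ, ∀ x, |ψ x| ≤ B) →
      (∫ x in Ω, (Real.sqrt (vhat x) - Real.sqrt (u x)) * Real.sqrt (vhat x) * ψ x)
        = -(τ / 2) * ∫ x in Ω, deriv F (vhat x) * vhat x * ψ x :=
  stmt8_general d Ω hΩb F α β r hβ hr hF1 hF2 hF'' hFlow hA3 τ hτ u hu0 huI vhat hvA hvmin
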